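/- arXiv:1404.7299 — 3 statements merged into one kernel-verified Lean document; each statement's English description precedes it below -/
import Mathlib

section
/- Let (Ω, ℱ, ℙ) be a probability space. Let g : ℝ×ℝ → ℝ be convex and differentiable with ∂g/∂y(x,y) ≥ 0 for all (x,y), and let χ : ℝ → ℝ be convex and differentiable. Let X, X̂ : Ω → ℝ be random variables and R : Ω → ℝ a random variable with R ≥ 0 almost surely. Write ŷ := E[χ(X̂)] and y := E[χ(X)], and assume that χ(X), χ(X̂), (g(X̂,ŷ) − g(X,y))·R, ∂ₓg(X̂,ŷ)·R·(X̂−X), ∂_y g(X̂,ŷ)·R, and χ′(X̂)·(X̂−X) are all integrable. Then E[(g(X̂,ŷ) − g(X,y))·R] ≤ E[∂ₓg(X̂,ŷ)·R·(X̂−X)] + E[∂_y g(X̂,ŷ)·R] · E[χ′(X̂)·(X̂−X)]. -/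
/-!
Tangent-plane bounds for the convex functions `g` and `χ` do all the work. Pointwise,
`g(X̂, ŷ) - g(X, y) ≤ ∂ₓg · (X̂ - X) + ∂_y g · (ŷ - y)`, and integrating the tangent-line
bound for `χ` gives `ŷ - y ≤ E[χ'(X̂)(X̂ - X)]`. Since `∂_y g · R ≥ 0`, the mean-field term
`ŷ - y` may be replaced by this expectation; multiplying by `R ≥ 0` and integrating concludes.
-/

open MeasureTheory Set

theorem ConvexOn.add_deriv_mul_sub_le {S : Set ℝ} {f : ℝ → ℝ} (hf : ConvexOn ℝ S f)
    {x y : ℝ} (hx : x ∈ S) (hy : y ∈ S) (hd : DifferentiableAt ℝ f x) :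
    f x + deriv f x * (y - x) ≤ f y := by
  rcases lt_trichotomy y x with hyx | rfl | hxy
  · have h := hf.slope_le_deriv hy hx hyx hd
    rw [slope_def_field, div_le_iff₀ (sub_pos.2 hyx)] at h
    linarith
  · simp
  · have h := hf.deriv_le_slope hx hy hxy hd
    rw [slope_def_field, le_div_iff₀ (sub_pos.2 hxy)] at h
    linarith

theorem ConvexOn.add_fderiv_sub_le {E : Type*} [NormedAddCommGroup E] [NormedSpace ℝ E]
    {s : Set E} {g : E → ℝ} (hg : ConvexOn ℝ s g) {a b : E} (ha : a ∈ s) (hb : b ∈ s)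
    (hd : DifferentiableAt ℝ g b) :
    g b + fderiv ℝ g b (a - b) ≤ g a := by
  let γ : ℝ →ᵃ[ℝ] E := AffineMap.lineMap b a
  have hγ : HasDerivAt (g ∘ γ) (fderiv ℝ g b (a - b)) 0 := by
    have hd' : HasFDerivAt g (fderiv ℝ g b) (γ 0) := by simpa [γ] using hd.hasFDerivAt
    exact hd'.comp_hasDerivAt 0 AffineMap.hasDerivAt_lineMap
  have key := (hg.comp_affineMap γ).add_deriv_mul_sub_le (x := 0) (y := 1)
    (by simpa [γ] using hb) (by simpa [γ] using ha) hγ.differentiableAt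
  simpa [hγ.deriv, γ] using key

theorem ConvexOn.sub_le_partialDerivs {s : Set (ℝ × ℝ)} {g : ℝ × ℝ → ℝ} (hg : ConvexOn ℝ s g)
    {a b : ℝ × ℝ} (ha : a ∈ s) (hb : b ∈ s) (hd : DifferentiableAt ℝ g b) :
    g b - g a ≤ fderiv ℝ g b (1, 0) * (b.1 - a.1) + fderiv ℝ g b (0, 1) * (b.2 - a.2) := by
  have hsplit : a - b = (a.1 - b.1) • ((1 : ℝ), (0 : ℝ)) + (a.2 - b.2) • ((0 : ℝ), (1 : ℝ)) := by
    ext <;> simp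
  have h := hg.add_fderiv_sub_le ha hb hd
  rw [hsplit, map_add, map_smul, map_smul, smul_eq_mul, smul_eq_mul] at h
  linarith

theorem ConvexOn.integral_sub_integral_le_integral_deriv_mul_sub {Ω : Type*}
    [MeasurableSpace Ω] {μ : Measure Ω} {χ : ℝ → ℝ} (hχ : ConvexOn ℝ univ χ)
    (hd : Differentiable ℝ χ) {X Xhat : Ω → ℝ} (hX : Integrable (fun ω => χ (X ω)) μ)
    (hXhat : Integrable (fun ω => χ (Xhat ω)) μ)
    (hderiv : Integrable (fun ω => deriv χ (Xhat ω) * (Xhat ω - X ω)) μ) :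
    ∫ ω, χ (Xhat ω) ∂μ - ∫ ω, χ (X ω) ∂μ ≤ ∫ ω, deriv χ (Xhat ω) * (Xhat ω - X ω) ∂μ := by
  rw [← integral_sub hXhat hX]
  refine integral_mono (hXhat.sub hX) hderiv fun ω => ?_
  have h := hχ.add_deriv_mul_sub_le (mem_univ (Xhat ω)) (mem_univ (X ω)) (hd _)
  linarith

theorem terminal_cost_convexity_estimate_general {Ω : Type*} [MeasurableSpace Ω]
    (ℙ : Measure Ω)
    (g : ℝ × ℝ → ℝ) (hgconv : ConvexOn ℝ Set.univ g) (hgdiff : Differentiable ℝ g)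
    (hgy : ∀ p : ℝ × ℝ, 0 ≤ fderiv ℝ g p (0, 1))
    (χ : ℝ → ℝ) (hχconv : ConvexOn ℝ Set.univ χ) (hχdiff : Differentiable ℝ χ)
    (X Xhat R : Ω → ℝ) (hR : ∀ᵐ ω ∂ℙ, 0 ≤ R ω)
    (hχX : Integrable (fun ω => χ (X ω)) ℙ)
    (hχXhat : Integrable (fun ω => χ (Xhat ω)) ℙ) :
    let yhat : ℝ := ∫ ω, χ (Xhat ω) ∂ℙ
    let y : ℝ := ∫ ω, χ (X ω) ∂ℙ
    Integrable (fun ω => (g (Xhat ω, yhat) - g (X ω, y)) * R ω) ℙ →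
    Integrable (fun ω => fderiv ℝ g (Xhat ω, yhat) (1, 0) * R ω * (Xhat ω - X ω)) ℙ →
    Integrable (fun ω => fderiv ℝ g (Xhat ω, yhat) (0, 1) * R ω) ℙ →
    Integrable (fun ω => deriv χ (Xhat ω) * (Xhat ω - X ω)) ℙ →
    (∫ ω, (g (Xhat ω, yhat) - g (X ω, y)) * R ω ∂ℙ) ≤
      (∫ ω, fderiv ℝ g (Xhat ω, yhat) (1, 0) * R ω * (Xhat ω - X ω) ∂ℙ) +
      (∫ ω, fderiv ℝ g (Xhat ω, yhat) (0, 1) * R ω ∂ℙ) *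
        ∫ ω, deriv χ (Xhat ω) * (Xhat ω - X ω) ∂ℙ := by
  intro yhat y hcost hgx hgy_int hχ'
  set c := ∫ ω, deriv χ (Xhat ω) * (Xhat ω - X ω) ∂ℙ
  have hmean : yhat - y ≤ c :=
    hχconv.integral_sub_integral_le_integral_deriv_mul_sub hχdiff hχX hχXhat hχ'
  have hpointwise : ∀ᵐ ω ∂ℙ, (g (Xhat ω, yhat) - g (X ω, y)) * R ω ≤
      fderiv ℝ g (Xhat ω, yhat) (1, 0) * R ω * (Xhat ω - X ω) +
        fderiv ℝ g (Xhat ω, yhat) (0, 1) * R ω * c := by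
    filter_upwards [hR] with ω hRω
    have htangent := mul_le_mul_of_nonneg_right
      (hgconv.sub_le_partialDerivs (mem_univ (X ω, y)) (mem_univ (Xhat ω, yhat)) (hgdiff _)) hRω
    have hshift := mul_le_mul_of_nonneg_left hmean (mul_nonneg (hgy (Xhat ω, yhat)) hRω)
    linarith
  calc (∫ ω, (g (Xhat ω, yhat) - g (X ω, y)) * R ω ∂ℙ)
      ≤ ∫ ω, (fderiv ℝ g (Xhat ω, yhat) (1, 0) * R ω * (Xhat ω - X ω) +
          fderiv ℝ g (Xhat ω, yhat) (0, 1) * R ω * c) ∂ℙ :=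
        integral_mono_ae hcost (hgx.add (hgy_int.mul_const c)) hpointwise
    _ = _ := by rw [integral_add hgx (hgy_int.mul_const c), integral_mul_const]

/-- The terminal-cost estimate in the proof of the sufficient maximum principle
(Theorem 1): if `g` is convex and differentiable with `∂g/∂y ≥ 0`, `χ` is convex and
differentiable, `R ≥ 0` a.s., and writing `ŷ = E[χ(X̂)]`, `y = E[χ(X)]`, then
`E[(g(X̂,ŷ) - g(X,y)) R] ≤ E[∂ₓg(X̂,ŷ) R (X̂-X)] + E[∂_y g(X̂,ŷ) R] · E[χ'(X̂)(X̂-X)]`. -/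
theorem terminal_cost_convexity_estimate {Ω : Type*} [MeasurableSpace Ω]
    (ℙ : Measure Ω) [IsProbabilityMeasure ℙ]
    (g : ℝ × ℝ → ℝ) (hgconv : ConvexOn ℝ Set.univ g) (hgdiff : Differentiable ℝ g)
    (hgy : ∀ p : ℝ × ℝ, 0 ≤ fderiv ℝ g p (0, 1))
    (χ : ℝ → ℝ) (hχconv : ConvexOn ℝ Set.univ χ) (hχdiff : Differentiable ℝ χ)
    (X Xhat R : Ω → ℝ) (hR : ∀ᵐ ω ∂ℙ, 0 ≤ R ω)
    (hχX : Integrable (fun ω => χ (X ω)) ℙ)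
    (hχXhat : Integrable (fun ω => χ (Xhat ω)) ℙ) :
    let yhat : ℝ := ∫ ω, χ (Xhat ω) ∂ℙ
    let y : ℝ := ∫ ω, χ (X ω) ∂ℙ
    Integrable (fun ω => (g (Xhat ω, yhat) - g (X ω, y)) * R ω) ℙ →
    Integrable (fun ω => fderiv ℝ g (Xhat ω, yhat) (1, 0) * R ω * (Xhat ω - X ω)) ℙ →
    Integrable (fun ω => fderiv ℝ g (Xhat ω, yhat) (0, 1) * R ω) ℙ →
    Integrable (fun ω => deriv χ (Xhat ω) * (Xhat ω - X ω)) ℙ →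
    (∫ ω, (g (Xhat ω, yhat) - g (X ω, y)) * R ω ∂ℙ) ≤
      (∫ ω, fderiv ℝ g (Xhat ω, yhat) (1, 0) * R ω * (Xhat ω - X ω) ∂ℙ) +
      (∫ ω, fderiv ℝ g (Xhat ω, yhat) (0, 1) * R ω ∂ℙ) *
        ∫ ω, deriv χ (Xhat ω) * (Xhat ω - X ω) ∂ℙ :=
  terminal_cost_convexity_estimate_general ℙ g hgconv hgdiff hgy χ hχconv hχdiff X Xhat R hR hχX
    hχXhat
end

section
/- Let (Ω, ℱ, ℙ) be a probability space and k ≥ 1. Let F : Ω × ℝ × ℝᵏ × ℝ → ℝ be jointly measurable such that for every ω ∈ Ω the map (x,y,v) ↦ F(ω,x,y,v) is convex and differentiable on ℝ × ℝᵏ × ℝ, with ∂F/∂yᵢ(ω,x,y,v) ≥ 0 for every i = 1,…,k and all (x,y,v). Let γ₁,…,γ_k : ℝ → ℝ be convex and differentiable. Let X, X̂, U, Û : Ω → ℝ be random variables such that each γᵢ(X) and γᵢ(X̂) is integrable; write ŷ := (E[γ₁(X̂)],…,E[γ_k(X̂)]) and y := (E[γ₁(X)],…,E[γ_k(X)]).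 Assume that F(·,X̂,ŷ,Û) − F(·,X,y,U), ∂ₓF(·,X̂,ŷ,Û)·(X̂−X), ∂_{yᵢ}F(·,X̂,ŷ,Û) for each i, γᵢ′(X̂)·(X̂−X) for each i, and ∂_vF(·,X̂,ŷ,Û)·(Û−U) are all integrable. Then E[F(·,X̂,ŷ,Û) − F(·,X,y,U)] ≤ E[∂ₓF(·,X̂,ŷ,Û)·(X̂−X)] + ∑_{i=1}^{k} E[∂_{yᵢ}F(·,X̂,ŷ,Û)] · E[γᵢ′(X̂)·(X̂−X)] + E[∂_vF(·,X̂,ŷ,Û)·(Û−U)]. -/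
/-! For each `ω`, the tangent-plane inequality for the convex `F ω` at `(X̂, ŷ, Û)` bounds
`F(X̂, ŷ, Û) - F(X, y, U)` by its first-order expansion, in which the increment `ŷ - y` carries the
nonnegative coefficients `∂_{yᵢ}F`. The tangent-line inequality for `γᵢ`, integrated, gives
`ŷᵢ - yᵢ ≤ E[γᵢ'(X̂)(X̂ - X)]`, so the increment may be replaced by these constants; integrating the
resulting pointwise bound gives the estimate. -/

open MeasureTheory Filter Topology Set

theorem ConvexOn.fderiv_sub_le {E : Type*} [NormedAddCommGroup E] [NormedSpace ℝ E] {s : Set E}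
    {f : E → ℝ} (hf : ConvexOn ℝ s f) {a b : E} (ha : a ∈ s) (hb : b ∈ s)
    (hd : DifferentiableAt ℝ f a) :
    fderiv ℝ f a (b - a) ≤ f b - f a := by
  set g : ℝ → ℝ := fun t => f (a + t • (b - a))
  have hg : HasDerivAt g (fderiv ℝ f a (b - a)) 0 := by
    have hline : HasDerivAt (fun t : ℝ => a + t • (b - a)) (b - a) 0 := by
      simpa using ((hasDerivAt_id (0 : ℝ)).smul_const (b - a)).const_add a
    exact hd.hasFDerivAt.comp_hasDerivAt_of_eq (0 : ℝ) hline (by simp)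
  have hchord : ∀ t ∈ Ioc (0 : ℝ) 1, t⁻¹ • (g (0 + t) - g 0) ≤ f b - f a := by
    rintro t ⟨ht0, ht1⟩
    have hconv := hf.2 ha hb (sub_nonneg.2 ht1) ht0.le (by ring)
    have hpt : (1 - t) • a + t • b = a + t • (b - a) := by
      rw [smul_sub, sub_smul, one_smul]; abel
    rw [hpt] at hconv
    rw [smul_eq_mul, inv_mul_le_iff₀ ht0]
    simp only [g, zero_add, zero_smul, add_zero, smul_eq_mul] at hconv ⊢
    linarith
  exact le_of_tendsto hg.tendsto_slope_zero_right
    (eventually_of_mem (Ioc_mem_nhdsGT zero_lt_one) hchord)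

theorem ConvexOn.deriv_mul_sub_le {s : Set ℝ} {f : ℝ → ℝ} (hf : ConvexOn ℝ s f) {a b : ℝ}
    (ha : a ∈ s) (hb : b ∈ s) (hd : DifferentiableAt ℝ f a) :
    deriv f a * (b - a) ≤ f b - f a := by
  simpa [hd.hasDerivAt.hasFDerivAt.fderiv, mul_comm] using hf.fderiv_sub_le ha hb hd

theorem ContinuousLinearMap.apply_mk_eq_sum_coords {R ι : Type*} [CommSemiring R]
    [TopologicalSpace R] [Fintype ι] [DecidableEq ι]
    (T : R × (ι → R) × R →L[R] R) (x : R) (y : ι → R) (v : R) :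
    T (x, y, v) = T (1, 0, 0) * x + ∑ i, T (0, Pi.single i 1, 0) * y i + T (0, 0, 1) * v := by
  have hsplit : ((x, y, v) : R × (ι → R) × R)
      = x • (1, 0, 0) + ∑ i, y i • ((0, Pi.single i 1, 0) : R × (ι → R) × R) + v • (0, 0, 1) := by
    ext <;> simp [Prod.fst_sum, Prod.snd_sum, Finset.sum_apply, Pi.single_apply]
  simp only [hsplit, map_add, map_sum, map_smul, smul_eq_mul, mul_comm]

theorem ConvexOn.integral_comp_sub_le_integral_deriv_mul {α : Type*} [MeasurableSpace α]
    {μ : Measure α} {γ : ℝ → ℝ} (hγ : ConvexOn ℝ univ γ) (hd : Differentiable ℝ γ)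
    {X Y : α → ℝ} (hX : Integrable (fun a => γ (X a)) μ) (hY : Integrable (fun a => γ (Y a)) μ)
    (hXY : Integrable (fun ω => deriv γ (Y ω) * (Y ω - X ω)) μ) :
    ∫ ω, γ (Y ω) ∂μ - ∫ ω, γ (X ω) ∂μ ≤ ∫ ω, deriv γ (Y ω) * (Y ω - X ω) ∂μ := by
  have htangent : ∀ ω, γ (Y ω) - γ (X ω) ≤ deriv γ (Y ω) * (Y ω - X ω) := fun ω => by
    have := hγ.deriv_mul_sub_le (mem_univ (Y ω)) (mem_univ (X ω)) (hd (Y ω))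
    linarith
  rw [← integral_sub hY hX]
  exact integral_mono (hY.sub hX) hXY htangent

theorem ConvexOn.sub_le_of_fderiv_pi_nonneg {ι : Type*} [Fintype ι] [DecidableEq ι]
    {f : ℝ × (ι → ℝ) × ℝ → ℝ} (hf : ConvexOn ℝ univ f) {x x' u u' : ℝ} {y y' c : ι → ℝ}
    (hd : DifferentiableAt ℝ f (x', y', u'))
    (hy : ∀ i, 0 ≤ fderiv ℝ f (x', y', u') (0, Pi.single i 1, 0)) (hc : ∀ i, y' i - y i ≤ c i) :
    f (x', y', u') - f (x, y, u) ≤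
      fderiv ℝ f (x', y', u') (1, 0, 0) * (x' - x) +
      ∑ i, fderiv ℝ f (x', y', u') (0, Pi.single i 1, 0) * c i +
      fderiv ℝ f (x', y', u') (0, 0, 1) * (u' - u) := by
  have htangent := hf.fderiv_sub_le (mem_univ _) (mem_univ (x, y, u)) hd
  rw [← neg_sub, map_neg, Prod.mk_sub_mk, Prod.mk_sub_mk,
    ContinuousLinearMap.apply_mk_eq_sum_coords] at htangent
  have hincrement : ∑ i, fderiv ℝ f (x', y', u') (0, Pi.single i 1, 0) * (y' - y) i ≤
      ∑ i, fderiv ℝ f (x', y', u') (0, Pi.single i 1, 0) * c i :=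
    Finset.sum_le_sum fun i _ => mul_le_mul_of_nonneg_left (hc i) (hy i)
  linarith

theorem hamiltonian_convexity_estimate_general {Ω : Type*} [MeasurableSpace Ω]
    (ℙ : Measure Ω) (k : ℕ)
    (F : Ω → ℝ × (Fin k → ℝ) × ℝ → ℝ)
    (hFconv : ∀ ω : Ω, ConvexOn ℝ Set.univ (F ω))
    (hFdiff : ∀ ω : Ω, Differentiable ℝ (F ω))
    (hFy : ∀ (ω : Ω) (q : ℝ × (Fin k → ℝ) × ℝ) (i : Fin k),
      0 ≤ fderiv ℝ (F ω) q (0, Pi.single i 1, 0))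
    (γ : Fin k → ℝ → ℝ)
    (hγconv : ∀ i, ConvexOn ℝ Set.univ (γ i))
    (hγdiff : ∀ i, Differentiable ℝ (γ i))
    (X Xhat U Uhat : Ω → ℝ)
    (hγX : ∀ i, Integrable (fun ω => γ i (X ω)) ℙ)
    (hγXhat : ∀ i, Integrable (fun ω => γ i (Xhat ω)) ℙ) :
    let yhat : Fin k → ℝ := fun i => ∫ ω, γ i (Xhat ω) ∂ℙ
    let y : Fin k → ℝ := fun i => ∫ ω, γ i (X ω) ∂ℙ
    Integrable (fun ω => F ω (Xhat ω, yhat, Uhat ω) - F ω (X ω, y, U ω)) ℙ →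
    Integrable (fun ω => fderiv ℝ (F ω) (Xhat ω, yhat, Uhat ω) (1, 0, 0) * (Xhat ω - X ω)) ℙ →
    (∀ i : Fin k,
      Integrable (fun ω => fderiv ℝ (F ω) (Xhat ω, yhat, Uhat ω) (0, Pi.single i 1, 0)) ℙ) →
    (∀ i : Fin k, Integrable (fun ω => deriv (γ i) (Xhat ω) * (Xhat ω - X ω)) ℙ) →
    Integrable (fun ω => fderiv ℝ (F ω) (Xhat ω, yhat, Uhat ω) (0, 0, 1) * (Uhat ω - U ω)) ℙ →
    (∫ ω, (F ω (Xhat ω, yhat, Uhat ω) - F ω (X ω, y, U ω)) ∂ℙ) ≤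
      (∫ ω, fderiv ℝ (F ω) (Xhat ω, yhat, Uhat ω) (1, 0, 0) * (Xhat ω - X ω) ∂ℙ) +
      (∑ i : Fin k,
        (∫ ω, fderiv ℝ (F ω) (Xhat ω, yhat, Uhat ω) (0, Pi.single i 1, 0) ∂ℙ) *
          ∫ ω, deriv (γ i) (Xhat ω) * (Xhat ω - X ω) ∂ℙ) +
      ∫ ω, fderiv ℝ (F ω) (Xhat ω, yhat, Uhat ω) (0, 0, 1) * (Uhat ω - U ω) ∂ℙ := by
  intro yhat y hF hx hy hγ hv
  have hmean (i : Fin k) : yhat i - y i ≤ ∫ ω, deriv (γ i) (Xhat ω) * (Xhat ω - X ω) ∂ℙ :=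
    (hγconv i).integral_comp_sub_le_integral_deriv_mul (hγdiff i) (hγX i) (hγXhat i) (hγ i)
  have hsum : Integrable (fun ω =>
      ∑ i, fderiv ℝ (F ω) (Xhat ω, yhat, Uhat ω) (0, Pi.single i 1, 0) *
        ∫ ω, deriv (γ i) (Xhat ω) * (Xhat ω - X ω) ∂ℙ) ℙ :=
    integrable_finsetSum _ fun i _ => (hy i).mul_const _
  calc _ ≤ _ := integral_mono hF ((hx.add hsum).add hv) fun ω =>
        (hFconv ω).sub_le_of_fderiv_pi_nonneg (hFdiff ω _) (hFy ω _) hmean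
    _ = _ := by
      rw [integral_add' (hx.add hsum) hv, integral_add' hx hsum,
        integral_finsetSum _ fun i _ => (hy i).mul_const _]
      simp only [integral_mul_const]

/-- The Hamiltonian convexity estimate in the proof of the sufficient maximum principle
(Theorem 1): if `F(ω,·,·,·)` is convex and differentiable on `ℝ × ℝᵏ × ℝ` with
`∂F/∂yᵢ ≥ 0`, the `γᵢ` are convex and differentiable, and writing
`ŷᵢ = E[γᵢ(X̂)]`, `yᵢ = E[γᵢ(X)]`, then
`E[F(·,X̂,ŷ,Û) - F(·,X,y,U)] ≤ E[∂ₓF(·,X̂,ŷ,Û)(X̂-X)]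
  + ∑ᵢ E[∂_{yᵢ}F(·,X̂,ŷ,Û)] E[γᵢ'(X̂)(X̂-X)] + E[∂_vF(·,X̂,ŷ,Û)(Û-U)]`. -/
theorem hamiltonian_convexity_estimate {Ω : Type*} [MeasurableSpace Ω]
    (ℙ : Measure Ω) [IsProbabilityMeasure ℙ] (k : ℕ) (hk : 1 ≤ k)
    (F : Ω → ℝ × (Fin k → ℝ) × ℝ → ℝ)
    (hFmeas : Measurable (Function.uncurry F))
    (hFconv : ∀ ω : Ω, ConvexOn ℝ Set.univ (F ω))
    (hFdiff : ∀ ω : Ω, Differentiable ℝ (F ω))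
    (hFy : ∀ (ω : Ω) (q : ℝ × (Fin k → ℝ) × ℝ) (i : Fin k),
      0 ≤ fderiv ℝ (F ω) q (0, Pi.single i 1, 0))
    (γ : Fin k → ℝ → ℝ)
    (hγconv : ∀ i, ConvexOn ℝ Set.univ (γ i))
    (hγdiff : ∀ i, Differentiable ℝ (γ i))
    (X Xhat U Uhat : Ω → ℝ)
    (hγX : ∀ i, Integrable (fun ω => γ i (X ω)) ℙ)
    (hγXhat : ∀ i, Integrable (fun ω => γ i (Xhat ω)) ℙ) :
    let yhat : Fin k → ℝ := fun i => ∫ ω, γ i (Xhat ω) ∂ℙ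
    let y : Fin k → ℝ := fun i => ∫ ω, γ i (X ω) ∂ℙ
    Integrable (fun ω => F ω (Xhat ω, yhat, Uhat ω) - F ω (X ω, y, U ω)) ℙ →
    Integrable (fun ω => fderiv ℝ (F ω) (Xhat ω, yhat, Uhat ω) (1, 0, 0) * (Xhat ω - X ω)) ℙ →
    (∀ i : Fin k,
      Integrable (fun ω => fderiv ℝ (F ω) (Xhat ω, yhat, Uhat ω) (0, Pi.single i 1, 0)) ℙ) →
    (∀ i : Fin k, Integrable (fun ω => deriv (γ i) (Xhat ω) * (Xhat ω - X ω)) ℙ) →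
    Integrable (fun ω => fderiv ℝ (F ω) (Xhat ω, yhat, Uhat ω) (0, 0, 1) * (Uhat ω - U ω)) ℙ →
    (∫ ω, (F ω (Xhat ω, yhat, Uhat ω) - F ω (X ω, y, U ω)) ∂ℙ) ≤
      (∫ ω, fderiv ℝ (F ω) (Xhat ω, yhat, Uhat ω) (1, 0, 0) * (Xhat ω - X ω) ∂ℙ) +
      (∑ i : Fin k,
        (∫ ω, fderiv ℝ (F ω) (Xhat ω, yhat, Uhat ω) (0, Pi.single i 1, 0) ∂ℙ) *
          ∫ ω, deriv (γ i) (Xhat ω) * (Xhat ω - X ω) ∂ℙ) +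
      ∫ ω, fderiv ℝ (F ω) (Xhat ω, yhat, Uhat ω) (0, 0, 1) * (Uhat ω - U ω) ∂ℙ :=
  hamiltonian_convexity_estimate_general ℙ k F hFconv hFdiff hFy γ hγconv hγdiff X Xhat U Uhat hγX
    hγXhat
end

section
/- Let (Ω, ℱ, ℙ) be a probability space, n ≥ 1, ε ≥ 0, K ≥ 0, L ≥ 0. Let h : ℝ×ℝ → ℝ be K-Lipschitz with respect to the Euclidean norm on ℝ², and let φ : ℝ → ℝ be L-Lipschitz. Let X₁,…,Xₙ and Y₁,…,Yₙ be square-integrable real random variables on Ω such that Y₁,…,Yₙ are independent and identically distributed, φ(Y₁) is square-integrable, and E[|Xⱼ − Yⱼ|²] ≤ ε for every j = 1,…,n. Then |E[h(X₁, (1/n)∑_{j=1}^n φ(Xⱼ))] − E[h(Y₁, E[φ(Y₁)])]| ≤ K·√ε + K·L·√ε + K·(Var(φ(Y₁))/n)^{1/2}, where Var(φ(Y₁)) = E[(φ(Y₁) − E[φ(Y₁)])²]. -/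
/-!
Compare both costs through the intermediate argument `(1/n) ∑ φ(Yⱼ)`. Since `h` is Lipschitz,
the difference of the costs is at most `K E|X₁ - Y₁| + K E|(1/n) ∑ φ(Xⱼ) - E φ(Y₁)|`.
By Cauchy–Schwarz, `E|Z| ≤ (E Z²)^{1/2}`, the first term and each `E|φ(Xⱼ) - φ(Yⱼ)|` are
`O(√ε)`, while the i.i.d. average `(1/n) ∑ φ(Yⱼ)` has variance `Var φ(Y₁) / n`, so it lies
within `(Var φ(Y₁) / n)^{1/2}` of its mean `E φ(Y₁)` in `L¹`.
-/

open MeasureTheory ProbabilityTheory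

section

variable {Ω : Type*} [MeasurableSpace Ω] {μ : Measure Ω}

lemma sq_integral_le_integral_sq [IsProbabilityMeasure μ] {f : Ω → ℝ} (hf : MemLp f 2 μ) :
    (∫ ω, f ω ∂μ) ^ 2 ≤ ∫ ω, f ω ^ 2 ∂μ := by
  have := variance_nonneg f μ
  rw [variance_eq_sub hf] at this
  simpa only [sub_nonneg, Pi.pow_apply] using this

lemma integral_abs_le_sqrt_integral_sq [IsProbabilityMeasure μ] {f : Ω → ℝ} (hf : MemLp f 2 μ) :
    ∫ ω, |f ω| ∂μ ≤ √(∫ ω, f ω ^ 2 ∂μ) := by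
  refine Real.le_sqrt_of_sq_le ?_
  simpa only [sq_abs] using sq_integral_le_integral_sq (f := fun ω => |f ω|) (by simpa using hf.norm)

lemma integral_abs_sub_integral_le_sqrt_variance [IsProbabilityMeasure μ] {f : Ω → ℝ}
    (hf : MemLp f 2 μ) : ∫ ω, |f ω - ∫ ω', f ω' ∂μ| ∂μ ≤ √(variance f μ) := by
  rw [variance_eq_integral hf.aemeasurable]
  exact integral_abs_le_sqrt_integral_sq (hf.sub (memLp_const _))

lemma integral_abs_sub_le_add {f g k : Ω → ℝ} (hf : Integrable f μ) (hg : Integrable g μ)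
    (hk : Integrable k μ) :
    ∫ ω, |f ω - k ω| ∂μ ≤ ∫ ω, |f ω - g ω| ∂μ + ∫ ω, |g ω - k ω| ∂μ := by
  have hfg : Integrable (fun ω => |f ω - g ω|) μ := (hf.sub hg).abs
  have hgk : Integrable (fun ω => |g ω - k ω|) μ := (hg.sub hk).abs
  rw [← integral_add hfg hgk]
  exact integral_mono (hf.sub hk).abs (hfg.add hgk) fun ω => abs_sub_le _ _ _

lemma integral_abs_comp_sub_comp_le {φ : ℝ → ℝ} {L : ℝ} (hφ : ∀ a b, |φ a - φ b| ≤ L * |a - b|)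
    {U V : Ω → ℝ} (hU : Integrable U μ) (hV : Integrable V μ)
    (hφU : Integrable (fun ω => φ (U ω)) μ) (hφV : Integrable (fun ω => φ (V ω)) μ) :
    ∫ ω, |φ (U ω) - φ (V ω)| ∂μ ≤ L * ∫ ω, |U ω - V ω| ∂μ := by
  rw [← integral_const_mul]
  exact integral_mono (hφU.sub hφV).abs ((hU.sub hV).abs.const_mul L) fun ω => hφ _ _

lemma LipschitzWith.memLp_comp [IsFiniteMeasure μ] {E F : Type*} [NormedAddCommGroup E]
    [NormedAddCommGroup F] {p : ENNReal} {K : NNReal} {g : E → F} (hg : LipschitzWith K g)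
    {f : Ω → E} (hf : MemLp f p μ) : MemLp (g ∘ f) p μ := by
  have hg0 : LipschitzWith K fun x => g x - g 0 := by
    simpa using hg.sub (LipschitzWith.const (g 0))
  convert (hg0.comp_memLp (by simp) hf).add (memLp_const (g 0)) using 1
  ext
  simp

lemma Real.sqrt_sq_add_sq_le_abs_add_abs (a b : ℝ) : √(a ^ 2 + b ^ 2) ≤ |a| + |b| :=
  Real.sqrt_le_iff.2 ⟨by positivity, by nlinarith [sq_abs a, sq_abs b, abs_nonneg a, abs_nonneg b]⟩

def IsEuclideanLipschitz (K : ℝ) (h : ℝ × ℝ → ℝ) : Prop :=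
  ∀ p q : ℝ × ℝ, |h p - h q| ≤ K * √((p.1 - q.1) ^ 2 + (p.2 - q.2) ^ 2)

namespace IsEuclideanLipschitz

variable {K : ℝ} {h : ℝ × ℝ → ℝ}

lemma abs_sub_le (hK : 0 ≤ K) (hh : IsEuclideanLipschitz K h) (p q : ℝ × ℝ) :
    |h p - h q| ≤ K * |p.1 - q.1| + K * |p.2 - q.2| := by
  rw [← mul_add]
  exact (hh p q).trans (mul_le_mul_of_nonneg_left (Real.sqrt_sq_add_sq_le_abs_add_abs _ _) hK)

lemma lipschitzWith (hK : 0 ≤ K) (hh : IsEuclideanLipschitz K h) :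
    LipschitzWith (Real.toNNReal (2 * K)) h := by
  refine .of_dist_le' fun p q => ?_
  have h₁ : |p.1 - q.1| ≤ dist p q := by
    rw [Prod.dist_eq, ← Real.dist_eq]; exact le_max_left _ _
  have h₂ : |p.2 - q.2| ≤ dist p q := by
    rw [Prod.dist_eq, ← Real.dist_eq]; exact le_max_right _ _
  rw [Real.dist_eq]
  linarith [hh.abs_sub_le hK p q, mul_le_mul_of_nonneg_left h₁ hK,
    mul_le_mul_of_nonneg_left h₂ hK]

variable [IsFiniteMeasure μ]

lemma integrable_comp (hK : 0 ≤ K) (hh : IsEuclideanLipschitz K h) {U V : Ω → ℝ}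
    (hU : Integrable U μ) (hV : Integrable V μ) : Integrable (fun ω => h (U ω, V ω)) μ := by
  rw [← memLp_one_iff_integrable] at hU hV ⊢
  exact (hh.lipschitzWith hK).memLp_comp (MemLp.of_fst_snd ⟨hU, hV⟩)

lemma abs_integral_sub_le (hK : 0 ≤ K) (hh : IsEuclideanLipschitz K h) {U U' V V' : Ω → ℝ}
    (hU : Integrable U μ) (hU' : Integrable U' μ) (hV : Integrable V μ) (hV' : Integrable V' μ) :
    |∫ ω, h (U ω, V ω) ∂μ - ∫ ω, h (U' ω, V' ω) ∂μ| ≤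
      K * ∫ ω, |U ω - U' ω| ∂μ + K * ∫ ω, |V ω - V' ω| ∂μ := by
  have hΔU : Integrable (fun ω => K * |U ω - U' ω|) μ := (hU.sub hU').abs.const_mul K
  have hΔV : Integrable (fun ω => K * |V ω - V' ω|) μ := (hV.sub hV').abs.const_mul K
  have hΔh := (hh.integrable_comp hK hU hV).sub (hh.integrable_comp hK hU' hV')
  rw [← integral_sub (hh.integrable_comp hK hU hV) (hh.integrable_comp hK hU' hV'),
    ← integral_const_mul, ← integral_const_mul, ← integral_add hΔU hΔV]
  exact abs_integral_le_integral_abs.trans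
    (integral_mono hΔh.abs (hΔU.add hΔV) fun ω => hh.abs_sub_le hK _ _)

end IsEuclideanLipschitz

variable {n : ℕ}

noncomputable def empiricalMean (Z : Fin n → Ω → ℝ) (ω : Ω) : ℝ := (1 / (n : ℝ)) * ∑ j, Z j ω

lemma memLp_empiricalMean {p : ENNReal} {Z : Fin n → Ω → ℝ} (hZ : ∀ j, MemLp (Z j) p μ) :
    MemLp (empiricalMean Z) p μ :=
  (memLp_finsetSum _ fun j _ => hZ j).const_mul _

lemma integrable_empiricalMean {Z : Fin n → Ω → ℝ} (hZ : ∀ j, Integrable (Z j) μ) :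
    Integrable (empiricalMean Z) μ :=
  (integrable_finsetSum _ fun j _ => hZ j).const_mul _

lemma integral_empiricalMean {Z : Fin n → Ω → ℝ} (hZ : ∀ j, Integrable (Z j) μ) :
    ∫ ω, empiricalMean Z ω ∂μ = (1 / (n : ℝ)) * ∑ j, ∫ ω, Z j ω ∂μ := by
  simp only [empiricalMean]
  rw [integral_const_mul, integral_finsetSum _ fun j _ => hZ j]

lemma integral_abs_empiricalMean_sub_le (hn : n ≠ 0) {U V : Fin n → Ω → ℝ}
    (hU : ∀ j, Integrable (U j) μ) (hV : ∀ j, Integrable (V j) μ) {δ : ℝ}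
    (hUV : ∀ j, ∫ ω, |U j ω - V j ω| ∂μ ≤ δ) :
    ∫ ω, |empiricalMean U ω - empiricalMean V ω| ∂μ ≤ δ := by
  have hΔ : ∀ j, Integrable (fun ω => |U j ω - V j ω|) μ := fun j => ((hU j).sub (hV j)).abs
  have hpt : ∀ ω, |empiricalMean U ω - empiricalMean V ω| ≤
      empiricalMean (fun j ω => |U j ω - V j ω|) ω := fun ω => by
    simp only [empiricalMean, ← mul_sub, ← Finset.sum_sub_distrib, abs_mul]
    gcongr
    · exact (abs_of_nonneg (by positivity)).le
    · exact Finset.abs_sum_le_sum_abs _ _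
  calc ∫ ω, |empiricalMean U ω - empiricalMean V ω| ∂μ
      ≤ ∫ ω, empiricalMean (fun j ω => |U j ω - V j ω|) ω ∂μ :=
        integral_mono ((integrable_empiricalMean hU).sub (integrable_empiricalMean hV)).abs
          (integrable_empiricalMean hΔ) hpt
    _ = (1 / (n : ℝ)) * ∑ j, ∫ ω, |U j ω - V j ω| ∂μ := integral_empiricalMean hΔ
    _ ≤ (1 / (n : ℝ)) * ∑ _j : Fin n, δ := by gcongr with j; exact hUV j
    _ = δ := by simp [field]

variable {Z : Fin n → Ω → ℝ} (i : Fin n)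

lemma integral_empiricalMean_of_identDistrib (hZ : ∀ j, Integrable (Z j) μ)
    (hid : ∀ j, IdentDistrib (Z j) (Z i) μ μ) :
    ∫ ω, empiricalMean Z ω ∂μ = ∫ ω, Z i ω ∂μ := by
  have hn : (n : ℝ) ≠ 0 := Nat.cast_ne_zero.2 (Fin.pos i).ne'
  simp [integral_empiricalMean hZ, fun j => (hid j).integral_eq, field]

lemma variance_empiricalMean (hZ : ∀ j, MemLp (Z j) 2 μ)
    (hind : Pairwise fun j k => IndepFun (Z j) (Z k) μ) (hid : ∀ j, IdentDistrib (Z j) (Z i) μ μ) :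
    variance (empiricalMean Z) μ = variance (Z i) μ / n := by
  have hn : (n : ℝ) ≠ 0 := Nat.cast_ne_zero.2 (Fin.pos i).ne'
  have hsum : variance (fun ω => ∑ j, Z j ω) μ = ∑ j, variance (Z j) μ := by
    rw [← IndepFun.variance_sum (fun j _ => hZ j) fun j _ k _ hjk => hind hjk]
    congr 1
    ext
    simp
  unfold empiricalMean
  rw [variance_const_mul, hsum, Finset.sum_congr rfl fun j _ => (hid j).variance_eq]
  simp [field]

variable [IsProbabilityMeasure μ]

lemma integral_abs_empiricalMean_sub_le_sqrt (hZ : ∀ j, MemLp (Z j) 2 μ)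
    (hind : Pairwise fun j k => IndepFun (Z j) (Z k) μ) (hid : ∀ j, IdentDistrib (Z j) (Z i) μ μ) :
    ∫ ω, |empiricalMean Z ω - ∫ ω', Z i ω' ∂μ| ∂μ ≤ √(variance (Z i) μ / n) := by
  rw [← variance_empiricalMean i hZ hind hid,
    ← integral_empiricalMean_of_identDistrib i (fun j => (hZ j).integrable one_le_two) hid]
  exact integral_abs_sub_integral_le_sqrt_variance (memLp_empiricalMean hZ)

lemma integral_abs_empiricalMean_sub_le_add_sqrt {W : Fin n → Ω → ℝ}
    (hZ : ∀ j, MemLp (Z j) 2 μ) (hW : ∀ j, MemLp (W j) 2 μ) {δ : ℝ}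
    (hZW : ∀ j, ∫ ω, |Z j ω - W j ω| ∂μ ≤ δ)
    (hind : Pairwise fun j k => IndepFun (W j) (W k) μ) (hid : ∀ j, IdentDistrib (W j) (W i) μ μ) :
    ∫ ω, |empiricalMean Z ω - ∫ ω', W i ω' ∂μ| ∂μ ≤ δ + √(variance (W i) μ / n) := by
  have hZ₁ : ∀ j, Integrable (Z j) μ := fun j => (hZ j).integrable one_le_two
  have hW₁ : ∀ j, Integrable (W j) μ := fun j => (hW j).integrable one_le_two
  calc _ ≤ ∫ ω, |empiricalMean Z ω - empiricalMean W ω| ∂μ +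
        ∫ ω, |empiricalMean W ω - ∫ ω', W i ω' ∂μ| ∂μ :=
        integral_abs_sub_le_add (integrable_empiricalMean hZ₁) (integrable_empiricalMean hW₁)
          (integrable_const _)
    _ ≤ _ := add_le_add (integral_abs_empiricalMean_sub_le (Fin.pos i).ne' hZ₁ hW₁ hZW)
        (integral_abs_empiricalMean_sub_le_sqrt i hW hind hid)

end

theorem cost_approximation_estimate_general {Ω : Type*} [MeasurableSpace Ω]
    (Pr : Measure Ω) [IsProbabilityMeasure Pr]
    (n : ℕ) (hn : 1 ≤ n) (ε K L : ℝ) (hK : 0 ≤ K) (hL : 0 ≤ L)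
    (h : ℝ × ℝ → ℝ)
    (hh : ∀ p q : ℝ × ℝ, |h p - h q| ≤ K * Real.sqrt ((p.1 - q.1) ^ 2 + (p.2 - q.2) ^ 2))
    (φ : ℝ → ℝ) (hφ : ∀ a b : ℝ, |φ a - φ b| ≤ L * |a - b|)
    (X Y : Fin n → Ω → ℝ)
    (hXsq : ∀ j, MemLp (X j) 2 Pr) (hYsq : ∀ j, MemLp (Y j) 2 Pr)
    (hYindep : iIndepFun Y Pr)
    (hYid : ∀ j : Fin n, Measure.map (Y j) Pr = Measure.map (Y ⟨0, hn⟩) Pr)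
    (hclose : ∀ j : Fin n, (∫ ω, |X j ω - Y j ω| ^ 2 ∂Pr) ≤ ε) :
    |(∫ ω, h (X ⟨0, hn⟩ ω, (1 / (n : ℝ)) * ∑ j : Fin n, φ (X j ω)) ∂Pr) -
        ∫ ω, h (Y ⟨0, hn⟩ ω, ∫ ω', φ (Y ⟨0, hn⟩ ω') ∂Pr) ∂Pr| ≤
      K * Real.sqrt ε + K * L * Real.sqrt ε +
        K * Real.sqrt ((∫ ω, (φ (Y ⟨0, hn⟩ ω) - ∫ ω', φ (Y ⟨0, hn⟩ ω') ∂Pr) ^ 2 ∂Pr) / n) := by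
  set i : Fin n := ⟨0, hn⟩
  have hφlip : LipschitzWith (Real.toNNReal L) φ :=
    .of_dist_le' fun a b => by simpa only [Real.dist_eq] using hφ a b
  have hφm : Measurable φ := hφlip.continuous.measurable
  have hφX : ∀ j, MemLp (fun ω => φ (X j ω)) 2 Pr := fun j => hφlip.memLp_comp (hXsq j)
  have hφY : ∀ j, MemLp (fun ω => φ (Y j ω)) 2 Pr := fun j => hφlip.memLp_comp (hYsq j)
  have hXY : ∀ j, ∫ ω, |X j ω - Y j ω| ∂Pr ≤ √ε := fun j =>
    (integral_abs_le_sqrt_integral_sq ((hXsq j).sub (hYsq j))).trans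
      (Real.sqrt_le_sqrt (by simpa only [Pi.sub_apply, sq_abs] using hclose j))
  have hφXY : ∀ j, ∫ ω, |φ (X j ω) - φ (Y j ω)| ∂Pr ≤ L * √ε := fun j =>
    (integral_abs_comp_sub_comp_le hφ ((hXsq j).integrable one_le_two)
      ((hYsq j).integrable one_le_two) ((hφX j).integrable one_le_two)
      ((hφY j).integrable one_le_two)).trans (mul_le_mul_of_nonneg_left (hXY j) hL)
  have hmean := integral_abs_empiricalMean_sub_le_add_sqrt i hφX hφY hφXY
    (fun j k hjk => (hYindep.indepFun hjk).comp hφm hφm)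
    (fun j => IdentDistrib.comp ⟨(hYsq j).aemeasurable, (hYsq i).aemeasurable, hYid j⟩ hφm)
  calc _ ≤ K * ∫ ω, |X i ω - Y i ω| ∂Pr +
        K * ∫ ω, |empiricalMean (fun j ω => φ (X j ω)) ω - ∫ ω', φ (Y i ω') ∂Pr| ∂Pr :=
        IsEuclideanLipschitz.abs_integral_sub_le hK hh ((hXsq i).integrable one_le_two)
          ((hYsq i).integrable one_le_two)
          (integrable_empiricalMean fun j => (hφX j).integrable one_le_two) (integrable_const _)
    _ ≤ K * √ε + K * (L * √ε + √(variance (fun ω => φ (Y i ω)) Pr / n)) := by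
        gcongr
        exact hXY i
    _ = _ := by rw [variance_eq_integral (hφY i).aemeasurable]; ring

/-- The cost-approximation estimate behind `𝒥ⁱ(u¹,…,uⁿ) = Jⁱ(uⁱ) + O(√εₙ)` in the proof
of the ε-Nash equilibrium result (Theorem 2): if `h` is `K`-Lipschitz with respect to the
Euclidean norm on `ℝ²`, `φ` is `L`-Lipschitz, `Y₁, …, Yₙ` are i.i.d. with `φ(Y₁)` square
integrable, and `E[|Xⱼ - Yⱼ|²] ≤ ε` for each `j`, then
`|E[h(X₁, (1/n)∑ⱼ φ(Xⱼ))] - E[h(Y₁, E[φ(Y₁)])]| ≤ K√ε + KL√ε + K (Var(φ(Y₁))/n)^{1/2}`. -/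
theorem cost_approximation_estimate {Ω : Type*} [MeasurableSpace Ω]
    (Pr : Measure Ω) [IsProbabilityMeasure Pr]
    (n : ℕ) (hn : 1 ≤ n) (ε K L : ℝ) (hε : 0 ≤ ε) (hK : 0 ≤ K) (hL : 0 ≤ L)
    (h : ℝ × ℝ → ℝ)
    (hh : ∀ p q : ℝ × ℝ, |h p - h q| ≤ K * Real.sqrt ((p.1 - q.1) ^ 2 + (p.2 - q.2) ^ 2))
    (φ : ℝ → ℝ) (hφ : ∀ a b : ℝ, |φ a - φ b| ≤ L * |a - b|)
    (X Y : Fin n → Ω → ℝ)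
    (hXsq : ∀ j, MemLp (X j) 2 Pr) (hYsq : ∀ j, MemLp (Y j) 2 Pr)
    (hYmeas : ∀ j, Measurable (Y j))
    (hYindep : iIndepFun Y Pr)
    (hYid : ∀ j : Fin n, Measure.map (Y j) Pr = Measure.map (Y ⟨0, hn⟩) Pr)
    (hφYsq : MemLp (fun ω => φ (Y ⟨0, hn⟩ ω)) 2 Pr)
    (hclose : ∀ j : Fin n, (∫ ω, |X j ω - Y j ω| ^ 2 ∂Pr) ≤ ε) :
    |(∫ ω, h (X ⟨0, hn⟩ ω, (1 / (n : ℝ)) * ∑ j : Fin n, φ (X j ω)) ∂Pr) -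
        ∫ ω, h (Y ⟨0, hn⟩ ω, ∫ ω', φ (Y ⟨0, hn⟩ ω') ∂Pr) ∂Pr| ≤
      K * Real.sqrt ε + K * L * Real.sqrt ε +
        K * Real.sqrt ((∫ ω, (φ (Y ⟨0, hn⟩ ω) - ∫ ω', φ (Y ⟨0, hn⟩ ω') ∂Pr) ^ 2 ∂Pr) / n) :=
  cost_approximation_estimate_general Pr n hn ε K L hK hL h hh φ hφ X Y hXsq hYsq hYindep hYid
    hclose
end
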